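/- Let E be a simple pole (a,b)-module (respectively a regular (a,b)-module). Then for any change of variable θ, the left Â-module θ_*(E) is a simple pole (a,b)-module (respectively a regular (a,b)-module). -/

import Mathlib

/-!
Put `u = θ'(a)`, a unit of `Â`, so that `β = b·u`. On a simple pole module `E` the inclusion
`a·E ⊂ b·E` makes every `T(a)` preserve each `bᵏ·E` (write `T(a) = T(0) + a·T₁(a)` and use
`a·bᵏ = bᵏ·a + k·bᵏ⁺¹`); hence `βᵏ·E ⊂ bᵏ·E`, while `β·E = b·E` since `u` is invertible.
Thus `θ_*(E)` is `β`-torsion-free and `β`-adically separated, and its residues modulo `β` are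
those of `E` modulo `b`. A `ℂ[[b]]`-basis of `E` therefore has residues forming a basis of them,
and successive approximation makes it a basis of `θ_*(E)` over `ℂ[[b]]` acting through `Θ`. The pole condition comes
from `θ(a) = a·q(a)`, so `θ(a)·E ⊂ a·E ⊂ b·E = β·E`; regularity is transported along the same
underlying embedding.
-/

/- Axiomatized framework for Barlet's algebra `Â` and its (a,b)-modules. -/

open PowerSeries

noncomputable section

universe u v

/-- The algebra `Â` of formal series `Σ_ν P_ν(a)·b^ν` with `P_ν ∈ ℂ[[a]]`:
a `ℂ`-algebra with two distinguished elements `a`, `b` satisfying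
`a·b − b·a = b²`, containing copies of `ℂ[[a]]` and `ℂ[[b]]`, in which every
element has a unique expansion `Σ_ν P_ν(a)·b^ν` (expressed via truncations). -/
class AHatAlgebra (A : Type u) [Ring A] [Algebra ℂ A] where
  a : A
  b : A
  comm_ab : a * b - b * a = b ^ 2
  embA : PowerSeries ℂ →ₐ[ℂ] A
  embA_X : embA PowerSeries.X = a
  embB : PowerSeries ℂ →ₐ[ℂ] A
  embB_X : embB PowerSeries.X = b
  coeffb : A → ℕ → PowerSeries ℂ
  expand : ∀ (x : A) (N : ℕ),
      ∃ y : A, x = (∑ ν ∈ Finset.range N, embA (coeffb x ν) * b ^ ν) + y * b ^ N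
  coeffb_unique : ∀ (x : A) (N : ℕ) (P : ℕ → PowerSeries ℂ) (y : A),
      x = (∑ ν ∈ Finset.range N, embA (P ν) * b ^ ν) + y * b ^ N →
      ∀ ν < N, coeffb x ν = P ν

namespace AHat

variable (A : Type u) [Ring A] [Algebra ℂ A] [AHatAlgebra A]

/-- The element `a` of `Â`. -/
def av : A := AHatAlgebra.a
/-- The element `b` of `Â`. -/
def bv : A := AHatAlgebra.b
/-- The embedding `ℂ[[a]] → Â`, `T ↦ T(a)`. -/
def eA : PowerSeries ℂ →ₐ[ℂ] A := AHatAlgebra.embA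
/-- The embedding `ℂ[[b]] → Â`, `S ↦ S(b)`. -/
def eB : PowerSeries ℂ →ₐ[ℂ] A := AHatAlgebra.embB

/-- The `ℂ[[b]]`-module structure on an `Â`-module, via `S ↦ S(b)`. -/
def psMod (E : Type v) [AddCommGroup E] [Module A E] : Module (PowerSeries ℂ) E :=
  Module.compHom E (eB A).toRingHom

/-- The `ℂ`-module structure on an `Â`-module. -/
def cMod (E : Type v) [AddCommGroup E] [Module A E] : Module ℂ E :=
  Module.compHom E (algebraMap ℂ A)

/-- A simple pole (a,b)-module : free and finitely generated over `ℂ[[b]]`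
with `a·E ⊂ b·E`. -/
def IsSimplePole (E : Type v) [AddCommGroup E] [Module A E] : Prop :=
  (letI := psMod A E
   Module.Finite (PowerSeries ℂ) E ∧ Module.Free (PowerSeries ℂ) E) ∧
  ∀ x : E, ∃ y : E, av A • x = bv A • y

/-- A regular (a,b)-module : one contained in a simple pole (a,b)-module. -/
def IsRegular (E : Type v) [AddCommGroup E] [Module A E] : Prop :=
  ∃ (F : ModuleCat.{v} A) (i : E →ₗ[A] F), IsSimplePole A F ∧ Function.Injective i

/-- Rank over `ℂ[[b]]`. -/
def bRank (E : Type v) [AddCommGroup E] [Module A E] : ℕ :=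
  letI := psMod A E
  Module.finrank (PowerSeries ℂ) E

/-- Generated over `Â` by a single element. -/
def IsMonogenic (E : Type v) [AddCommGroup E] [Module A E] : Prop :=
  ∃ x : E, Submodule.span A {x} = ⊤

/-- `i : E → F` realizes `F` as the sharp `E^♯` of `E` : `F` has a simple pole,
`i` is injective, and every `Â`-linear map from `E` to a simple pole module
factors uniquely through `i`. -/
def IsSharpOf (E : Type v) [AddCommGroup E] [Module A E]
    (F : Type v) [AddCommGroup F] [Module A F] (i : E →ₗ[A] F) : Prop :=
  IsSimplePole A F ∧ Function.Injective i ∧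
  ∀ (G : ModuleCat.{v} A), IsSimplePole A G →
    ∀ f : E →ₗ[A] G, ∃! g : F →ₗ[A] G, g.comp i = f

/-- `B` is the Bernstein polynomial of the regular (a,b)-module `E` : the
minimal polynomial of `−b⁻¹·a` acting on `E^♯/b·E^♯`. -/
def IsBernsteinPolyOf (E : Type v) [AddCommGroup E] [Module A E]
    (B : Polynomial ℂ) : Prop :=
  ∃ (F : ModuleCat.{v} A) (i : E →ₗ[A] F), IsSharpOf A E F i ∧
    (letI := cMod A F
     ∃ W : Submodule ℂ F, (W : Set F) = {x : F | ∃ y : F, x = bv A • y} ∧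
       ∃ u : Module.End ℂ (F ⧸ W),
         (∀ x y : F, av A • x = bv A • y →
            u (Submodule.Quotient.mk x) = - Submodule.Quotient.mk y) ∧
         minpoly ℂ u = B)

/-- A fresco : a monogenic regular (a,b)-module whose Bernstein polynomial has
all its roots negative rational numbers. -/
def IsFresco (E : Type v) [AddCommGroup E] [Module A E] : Prop :=
  IsRegular A E ∧ IsMonogenic A E ∧
  ∃ B : Polynomial ℂ, IsBernsteinPolyOf A E B ∧
    ∀ z ∈ B.roots, ∃ q : ℚ, 0 < q ∧ z = -(q : ℂ)

/-- A `[λ]`-primitive fresco : every root of the Bernstein polynomial lies in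
`−λ−ℕ`. -/
def IsPrimitiveFresco (l : ℚ) (E : Type v) [AddCommGroup E] [Module A E] : Prop :=
  IsFresco A E ∧
  ∃ B : Polynomial ℂ, IsBernsteinPolyOf A E B ∧
    ∀ z ∈ B.roots, ∃ n : ℕ, z = -((l : ℂ) + (n : ℂ))

/-- `F` is (a copy of) the module `Ξ_λ^(N)` of `[λ]`-primitive asymptotic
expansions : free over `ℂ[[b]]` with basis `e₀, …, e_N` satisfying
`a·e₀ = λ·b·e₀` and `a·e_j = λ·b·e_j + b·e_{j−1}`. -/
def IsXi (l : ℚ) (N : ℕ) (F : Type v) [AddCommGroup F] [Module A F] : Prop :=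
  letI := psMod A F
  ∃ e : Module.Basis (Fin (N + 1)) (PowerSeries ℂ) F,
    av A • e 0 = (algebraMap ℂ A (l : ℂ) * bv A) • e 0 ∧
    ∀ j : Fin (N + 1), 0 < (j : ℕ) →
      av A • e j = (algebraMap ℂ A (l : ℂ) * bv A) • e j +
        bv A • e ⟨(j : ℕ) - 1, lt_of_le_of_lt (Nat.sub_le _ 1) j.isLt⟩

/-- A `[λ]`-primitive theme : a `[λ]`-primitive fresco embedding in some
`Ξ_λ^(N)`. -/
def IsTheme (l : ℚ) (E : Type v) [AddCommGroup E] [Module A E] : Prop :=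
  IsPrimitiveFresco A l E ∧
  ∃ (N : ℕ) (F : ModuleCat.{v} A) (i : E →ₗ[A] F),
    IsXi A l N F ∧ Function.Injective i

/-- A semi-simple `[λ]`-primitive fresco : every `Â`-linear map to some
`Ξ_λ^(N)` has rank at most 1. -/
def IsSemiSimpleFresco (l : ℚ) (E : Type v) [AddCommGroup E] [Module A E] : Prop :=
  IsPrimitiveFresco A l E ∧
  ∀ (N : ℕ) (F : ModuleCat.{v} A), IsXi A l N F →
    ∀ f : E →ₗ[A] F,
      letI := cMod A (F : Type v)
      Module.rank ℂ (Submodule.span ℂ (Set.range f)) ≤ 1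

/-- A normal submodule : the quotient is free over `ℂ[[b]]`. -/
def IsNormal (E : Type v) [AddCommGroup E] [Module A E] (F : Submodule A E) : Prop :=
  letI := psMod A (E ⧸ F)
  Module.Free (PowerSeries ℂ) (E ⧸ F)

/-- A Jordan–Hölder sequence for `E` of length `k`, with normal terms and rank
one quotients `F_{j+1}/F_j ≅ E_{μ_j} = Â/Â·(a − μ_j·b)`. -/
def IsJHSeq (E : Type v) [AddCommGroup E] [Module A E] (k : ℕ)
    (F : ℕ → Submodule A E) (μ : ℕ → ℚ) : Prop :=
  F 0 = ⊥ ∧ F k = ⊤ ∧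
  (∀ j ≤ k, IsNormal A E (F j)) ∧
  ∀ j < k, ∃ x : E, x ∈ F (j + 1) ∧
    F (j + 1) = F j ⊔ Submodule.span A {x} ∧
    (av A - algebraMap ℂ A ((μ j : ℚ) : ℂ) * bv A) • x ∈ F j ∧
    ∀ S : PowerSeries ℂ, eB A S • x ∈ F j → S = 0

/-- The principal Jordan–Hölder sequence : the `μ_j + j` are increasing. -/
def IsPrincipalJH (E : Type v) [AddCommGroup E] [Module A E] (k : ℕ)
    (F : ℕ → Submodule A E) (μ : ℕ → ℚ) : Prop :=
  IsJHSeq A E k F μ ∧ ∀ i j : ℕ, i ≤ j → j < k → μ i + i ≤ μ j + j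

/-- `E` has fundamental invariants `μ 0, …, μ (k−1)` (the numbers attached to
its principal Jordan–Hölder sequence of length `k`). -/
def HasInvariants (E : Type v) [AddCommGroup E] [Module A E] (k : ℕ)
    (μ : ℕ → ℚ) : Prop :=
  ∃ F : ℕ → Submodule A E, IsPrincipalJH A E k F μ

/-- Dimension over `ℂ` of `Ker (a − μ·b : E → E)`. -/
def deltaKer (E : Type v) [AddCommGroup E] [Module A E] (μ : ℚ) : ℕ :=
  letI := cMod A E
  Module.finrank ℂ
    (Submodule.span ℂ {x : E | (av A - algebraMap ℂ A (μ : ℂ) * bv A) • x = 0})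

/-- The ss-depth `d(E)` : maximal rank of a normal sub-theme of `E`. -/
def HasSSDepth (l : ℚ) (E : Type v) [AddCommGroup E] [Module A E] (d : ℕ) : Prop :=
  (∃ T : Submodule A E, IsNormal A E T ∧ IsTheme A l T ∧ bRank A T = d) ∧
  ∀ T : Submodule A E, IsNormal A E T → IsTheme A l T → bRank A T ≤ d

/-- `S` is `S₁(E)`, the biggest semi-simple submodule of `E` (it is normal). -/
def IsS1 (l : ℚ) (E : Type v) [AddCommGroup E] [Module A E]
    (S : Submodule A E) : Prop :=
  IsNormal A E S ∧ IsSemiSimpleFresco A l S ∧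
  ∀ S' : Submodule A E, IsSemiSimpleFresco A l S' → S' ≤ S

/-- `S` is `Σ¹(E)`, the smallest normal submodule of `E` with semi-simple
quotient. -/
def IsSigma1 (l : ℚ) (E : Type v) [AddCommGroup E] [Module A E]
    (S : Submodule A E) : Prop :=
  IsNormal A E S ∧ IsSemiSimpleFresco A l (E ⧸ S) ∧
  ∀ S' : Submodule A E, IsNormal A E S' → IsSemiSimpleFresco A l (E ⧸ S') → S ≤ S'

/-- The module `θ_*(E)` : same underlying group, with `Â` acting through `Θ`. -/
def Twisted (_Θ : A →+* A) (E : Type v) : Type v := E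

instance Twisted.instAddCommGroup (Θ : A →+* A) (E : Type v) [AddCommGroup E] :
    AddCommGroup (Twisted A Θ E) := inferInstanceAs (AddCommGroup E)

instance Twisted.instModule (Θ : A →+* A) (E : Type v) [AddCommGroup E]
    [Module A E] : Module A (Twisted A Θ E) := Module.compHom E Θ

/-- The element `(a − λ₁·b)·(1 + z·b^p)⁻¹·(a − (λ₁+p−1)·b)` of `Â`. -/
def P2 (l₁ : ℚ) (p : ℕ) (z : ℂ) : A :=
  (av A - algebraMap ℂ A (l₁ : ℂ) * bv A) *
    eB A (1 + PowerSeries.C z * PowerSeries.X ^ p : PowerSeries ℂ)⁻¹ *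
    (av A - algebraMap ℂ A ((l₁ + p - 1 : ℚ) : ℂ) * bv A)

/-- `E` is (isomorphic to) the rank 2 theme with fundamental invariants
`(λ₁, p)` and parameter `z`, namely
`E(z) = Â/Â·(a − λ₁·b)·(1 + z·b^p)⁻¹·(a − (λ₁+p−1)·b)`. -/
def HasParam (l₁ : ℚ) (p : ℕ) (z : ℂ) (E : Type u) [AddCommGroup E]
    [Module A E] : Prop :=
  Nonempty (E ≃ₗ[A] (A ⧸ Submodule.span A {P2 A l₁ p z}))

/-- The element `(a − λ₁·b)·(1 + γ·b)⁻¹·(a − λ₂·b)·(a − λ₃·b)` of `Â`,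
where `λ₂ = λ₁ + p₁ − 1` and `λ₃ = λ₂ + p₂ − 1`. -/
def P3 (l₁ : ℚ) (p₁ p₂ : ℕ) (γ : ℂ) : A :=
  (av A - algebraMap ℂ A (l₁ : ℂ) * bv A) *
    eB A (1 + PowerSeries.C γ * PowerSeries.X : PowerSeries ℂ)⁻¹ *
    (av A - algebraMap ℂ A ((l₁ + p₁ - 1 : ℚ) : ℂ) * bv A) *
    (av A - algebraMap ℂ A ((l₁ + p₁ + p₂ - 2 : ℚ) : ℂ) * bv A)

/-- The rank 3 fresco `E(γ) = Â/Â·(a − λ₁·b)·(1 + γ·b)⁻¹·(a − λ₂·b)·(a − λ₃·b)`. -/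
def E3 (l₁ : ℚ) (p₁ p₂ : ℕ) (γ : ℂ) : Type u :=
  A ⧸ Submodule.span A {P3 A l₁ p₁ p₂ γ}

instance (l₁ : ℚ) (p₁ p₂ : ℕ) (γ : ℂ) : AddCommGroup (E3 A l₁ p₁ p₂ γ) :=
  inferInstanceAs (AddCommGroup (A ⧸ Submodule.span A {P3 A l₁ p₁ p₂ γ}))

instance (l₁ : ℚ) (p₁ p₂ : ℕ) (γ : ℂ) : Module A (E3 A l₁ p₁ p₂ γ) :=
  inferInstanceAs (Module A (A ⧸ Submodule.span A {P3 A l₁ p₁ p₂ γ}))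

end AHat

theorem AlgHom.map_powerSeries_C {R B : Type*} [CommSemiring R] [Semiring B] [Algebra R B]
    (f : R⟦X⟧ →ₐ[R] B) (c : R) : f (C c) = algebraMap R B c :=
  f.commutes c

theorem PowerSeries.eq_zero_of_forall_X_pow_dvd {R : Type*} [Semiring R] {f : R⟦X⟧}
    (h : ∀ k : ℕ, (X : R⟦X⟧) ^ k ∣ f) : f = 0 :=
  PowerSeries.ext fun n => by simpa using X_pow_dvd_iff.mp (h (n + 1)) n n.lt_succ_self

section ModulesOverPowerSeries

variable {R : Type*} [CommRing R] {M : Type*} [AddCommGroup M] [Module R⟦X⟧ M] {ι : Type*}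

theorem Module.Basis.exists_eq_sum_C_smul_add_X_smul [Fintype ι] (B : Module.Basis ι R⟦X⟧ M)
    (x : M) : ∃ (c : ι → R) (y : M), x = ∑ i, C (c i) • B i + (X : R⟦X⟧) • y := by
  refine ⟨fun i => constantCoeff (B.repr x i),
    ∑ i, PowerSeries.mk (fun n => coeff (n + 1) (B.repr x i)) • B i, ?_⟩
  conv_lhs => rw [← B.sum_repr x]
  rw [Finset.smul_sum, ← Finset.sum_add_distrib]
  refine Finset.sum_congr rfl fun i _ => ?_
  rw [smul_smul, ← add_smul, ← sub_const_eq_X_mul_shift, add_sub_cancel]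

theorem Module.Basis.eq_zero_of_sum_C_smul_eq_X_smul [Fintype ι] (B : Module.Basis ι R⟦X⟧ M)
    {c : ι → R} {y : M} (h : ∑ i, C (c i) • B i = (X : R⟦X⟧) • y) : c = 0 := by
  classical
  funext i
  have hi := congrArg (fun z => B.repr z i) h
  simp only [map_sum, map_smul, Finsupp.finsetSum_apply, Finsupp.smul_apply, B.repr_self,
    Finsupp.single_apply, smul_eq_mul, mul_ite, mul_one, mul_zero, Finset.sum_ite_eq',
    Finset.mem_univ, if_true] at hi
  simpa using congrArg constantCoeff hi

theorem Module.Basis.X_smul_injective (B : Module.Basis ι R⟦X⟧ M) :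
    Function.Injective (fun x : M => (X : R⟦X⟧) • x) := by
  intro x y h
  refine B.repr.injective (Finsupp.ext fun i => X_mul_cancel ?_)
  simpa using congrArg (fun z => B.repr z i) h

theorem Module.Basis.eq_zero_of_forall_X_pow_smul (B : Module.Basis ι R⟦X⟧ M) {x : M}
    (h : ∀ k : ℕ, ∃ y : M, x = (X : R⟦X⟧) ^ k • y) : x = 0 := by
  refine B.repr.injective (Finsupp.ext fun i => ?_)
  rw [map_zero, Finsupp.zero_apply]
  refine PowerSeries.eq_zero_of_forall_X_pow_dvd fun k => ?_
  obtain ⟨y, rfl⟩ := h k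
  simp

theorem PowerSeries.linearIndependent_of_sum_C_smul_eq_X_smul [Fintype ι] {e : ι → M}
    (hX : Function.Injective (fun x : M => (X : R⟦X⟧) • x))
    (he : ∀ (c : ι → R) (y : M), ∑ i, C (c i) • e i = (X : R⟦X⟧) • y → c = 0) :
    LinearIndependent R⟦X⟧ e := by
  rw [Fintype.linearIndependent_iff]
  suffices h : ∀ k : ℕ, ∀ g : ι → R⟦X⟧, ∑ i, g i • e i = 0 → ∀ i, (X : R⟦X⟧) ^ k ∣ g i from
    fun g hg i => eq_zero_of_forall_X_pow_dvd fun k => h k g hg i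
  intro k
  induction k with
  | zero => simp
  | succ k ih =>
    intro g hg i
    set tail : ι → R⟦X⟧ := fun i => mk fun n => coeff (n + 1) (g i)
    have hsplit (i : ι) : g i = C (constantCoeff (g i)) + X * tail i :=
      eq_add_of_sub_eq' (sub_const_eq_X_mul_shift (g i))
    have hsum : ∑ i, C (constantCoeff (g i)) • e i + (X : R⟦X⟧) • ∑ i, tail i • e i = 0 := by
      rw [← hg, Finset.smul_sum, ← Finset.sum_add_distrib]
      exact Finset.sum_congr rfl fun i _ => by rw [smul_smul, ← add_smul, ← hsplit]
    have hc : ∀ i, constantCoeff (g i) = 0 := congrFun <|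
      he _ (-∑ i, tail i • e i) (by rw [smul_neg]; exact eq_neg_of_add_eq_zero_left hsum)
    have htail : ∑ i, tail i • e i = 0 := hX <| by simpa [hc] using hsum
    obtain ⟨q, hq⟩ := ih tail htail i
    exact ⟨q, by rw [hsplit i, hc i, hq, map_zero, zero_add, pow_succ', mul_assoc]⟩

theorem PowerSeries.span_eq_top_of_forall_exists_sum_C_smul_add_X_smul [Fintype ι] {e : ι → M}
    (hsep : ∀ x : M, (∀ k : ℕ, ∃ y : M, x = (X : R⟦X⟧) ^ k • y) → x = 0)
    (he : ∀ x : M, ∃ (c : ι → R) (y : M), x = ∑ i, C (c i) • e i + (X : R⟦X⟧) • y) :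
    Submodule.span R⟦X⟧ (Set.range e) = ⊤ := by
  choose c y hcy using he
  refine Submodule.eq_top_iff'.mpr fun x => ?_
  -- the coefficients of `x` are read off the successive remainders `y^[k] x`
  set σ : ι → R⟦X⟧ := fun i => mk fun k => c (y^[k] x) i
  have hpartial (k : ℕ) : x = ∑ i, (trunc k (σ i) : R⟦X⟧) • e i + (X : R⟦X⟧) ^ k • y^[k] x := by
    induction k with
    | zero => simp
    | succ k ih =>
      conv_lhs => rw [ih, hcy (y^[k] x), smul_add, Finset.smul_sum, smul_smul,
        ← pow_succ, ← Function.iterate_succ_apply' y, ← add_assoc, ← Finset.sum_add_distrib]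
      congr 1
      refine Finset.sum_congr rfl fun i _ => ?_
      rw [smul_smul, ← add_smul, trunc_succ, Polynomial.coe_add, Polynomial.coe_monomial,
        monomial_eq_C_mul_X_pow, coeff_mk, mul_comm (X ^ k)]
  rw [Submodule.mem_span_range_iff_exists_fun]
  refine ⟨σ, (sub_eq_zero.mp (hsep _ fun k => ?_)).symm⟩
  refine ⟨y^[k] x - ∑ i, (mk fun n => coeff (n + k) (σ i)) • e i, ?_⟩
  conv_lhs => rw [hpartial k]
  conv_lhs => enter [2, 2, i]; rw [eq_shift_mul_X_pow_add_trunc k (σ i)]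
  simp only [add_smul, Finset.sum_add_distrib, smul_sub, Finset.smul_sum, smul_smul,
    mul_comm (X ^ k)]
  abel

theorem Module.Basis.finite_free_of_addEquiv [Fintype ι] {N : Type*} [AddCommGroup N]
    [Module R⟦X⟧ N] (B : Module.Basis ι R⟦X⟧ M) (e : M ≃+ N)
    (hC : ∀ (c : R) (x : M), e (C c • x) = C c • e x)
    (hXM : ∀ x : M, ∃ y : M, (X : R⟦X⟧) • e x = e ((X : R⟦X⟧) • y))
    (hXN : ∀ x : M, ∃ y : M, e ((X : R⟦X⟧) • x) = (X : R⟦X⟧) • e y)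
    (hinj : Function.Injective (fun y : N => (X : R⟦X⟧) • y))
    (hsep : ∀ y : N, (∀ k : ℕ, ∃ z : N, y = (X : R⟦X⟧) ^ k • z) → y = 0) :
    Module.Finite R⟦X⟧ N ∧ Module.Free R⟦X⟧ N := by
  have hsum (c : ι → R) : ∑ i, C (c i) • e (B i) = e (∑ i, C (c i) • B i) := by
    simp only [hC, map_sum]
  have hindep (c : ι → R) (y : N) (h : ∑ i, C (c i) • e (B i) = (X : R⟦X⟧) • y) : c = 0 := by
    obtain ⟨x, rfl⟩ := e.surjective y
    obtain ⟨x', hx'⟩ := hXM x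
    rw [hsum, hx', e.injective.eq_iff] at h
    exact B.eq_zero_of_sum_C_smul_eq_X_smul h
  have hspan (y : N) : ∃ (c : ι → R) (z : N), y = ∑ i, C (c i) • e (B i) + (X : R⟦X⟧) • z := by
    obtain ⟨x, rfl⟩ := e.surjective y
    obtain ⟨c, z, rfl⟩ := B.exists_eq_sum_C_smul_add_X_smul x
    obtain ⟨z', hz'⟩ := hXN z
    exact ⟨c, e z', by rw [map_add, hz', hsum]⟩
  let B' := Module.Basis.mk (PowerSeries.linearIndependent_of_sum_C_smul_eq_X_smul hinj hindep)
    (PowerSeries.span_eq_top_of_forall_exists_sum_C_smul_add_X_smul hsep hspan).ge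
  exact ⟨.of_basis B', .of_basis B'⟩

end ModulesOverPowerSeries

namespace AHat

section Algebra

variable {A : Type u} [Ring A] [Algebra ℂ A] [AHatAlgebra A]

theorem eA_X : eA A X = av A := AHatAlgebra.embA_X

theorem eB_X : eB A X = bv A := AHatAlgebra.embB_X

theorem av_mul_bv_pow (k : ℕ) : av A * bv A ^ k = bv A ^ k * av A + k * bv A ^ (k + 1) := by
  induction k with
  | zero => simp
  | succ k ih =>
    have hab : av A * bv A = bv A * av A + bv A ^ 2 :=
      eq_add_of_sub_eq' (AHatAlgebra.comm_ab (A := A))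
    calc av A * bv A ^ (k + 1) = (av A * bv A ^ k) * bv A := by rw [pow_succ, mul_assoc]
      _ = bv A ^ k * (av A * bv A) + k * bv A ^ (k + 2) := by rw [ih]; noncomm_ring
      _ = bv A ^ (k + 1) * av A + ↑(k + 1) * bv A ^ (k + 2) := by
        rw [hab]; push_cast; noncomm_ring

end Algebra

section Filtration

variable {A : Type u} [Ring A] [Algebra ℂ A] [AHatAlgebra A]

variable (A) in
/-- `b^k·E`: only an additive subgroup, since `b` is not central in `Â`. -/
def bFiltration (E : Type*) [AddCommGroup E] [Module A E] (k : ℕ) : AddSubgroup E :=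
  (DistribSMul.toAddMonoidHom E (bv A ^ k)).range

variable {E : Type*} [AddCommGroup E] [Module A E]

theorem mem_bFiltration {k : ℕ} {x : E} : x ∈ bFiltration A E k ↔ ∃ y : E, bv A ^ k • y = x :=
  Iff.rfl

theorem bv_smul_mem_bFiltration {k : ℕ} {x : E} (hx : x ∈ bFiltration A E k) :
    bv A • x ∈ bFiltration A E (k + 1) := by
  obtain ⟨y, rfl⟩ := mem_bFiltration.mp hx
  exact mem_bFiltration.mpr ⟨y, by rw [pow_succ', mul_smul]⟩

theorem algebraMap_smul_mem_bFiltration (c : ℂ) {k : ℕ} {x : E}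
    (hx : x ∈ bFiltration A E k) : algebraMap ℂ A c • x ∈ bFiltration A E k := by
  obtain ⟨y, rfl⟩ := mem_bFiltration.mp hx
  exact mem_bFiltration.mpr ⟨algebraMap ℂ A c • y, by
    rw [← mul_smul, ← mul_smul, Algebra.commutes]⟩

theorem av_smul_mem_bFiltration (hpole : ∀ x : E, ∃ y : E, av A • x = bv A • y) {k : ℕ} {x : E}
    (hx : x ∈ bFiltration A E k) : av A • x ∈ bFiltration A E (k + 1) := by
  obtain ⟨y, rfl⟩ := mem_bFiltration.mp hx
  obtain ⟨z, hz⟩ := hpole y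
  have hcomm : (k : A) * bv A ^ (k + 1) = bv A ^ (k + 1) * k := (Nat.cast_commute k _).eq
  rw [← mul_smul, av_mul_bv_pow, add_smul, mul_smul, hz, ← mul_smul, ← pow_succ, hcomm, mul_smul]
  exact add_mem (mem_bFiltration.mpr ⟨z, rfl⟩) (mem_bFiltration.mpr ⟨_, rfl⟩)

theorem eA_smul_mem_bFiltration (hpole : ∀ x : E, ∃ y : E, av A • x = bv A • y) (f : ℂ⟦X⟧)
    {k : ℕ} {x : E} (hx : x ∈ bFiltration A E k) : eA A f • x ∈ bFiltration A E k := by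
  induction k generalizing f x with
  | zero => exact mem_bFiltration.mpr ⟨eA A f • x, by rw [pow_zero, one_smul]⟩
  | succ k ih =>
    obtain ⟨y, rfl⟩ := mem_bFiltration.mp hx
    have hy : bv A ^ (k + 1) • y ∈ bFiltration A E k :=
      mem_bFiltration.mpr ⟨bv A • y, by rw [← mul_smul, ← pow_succ]⟩
    -- `f(a) = f(0) + a·f₁(a)`, and `a` raises the filtration degree by one
    rw [eq_add_of_sub_eq' (sub_const_eq_X_mul_shift f), map_add, map_mul, eA_X, add_smul,
      mul_smul, (eA A).map_powerSeries_C]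
    exact add_mem (algebraMap_smul_mem_bFiltration _ hx)
      (av_smul_mem_bFiltration hpole (ih _ hy))

theorem bv_mul_eA_pow_smul_mem_bFiltration (hpole : ∀ x : E, ∃ y : E, av A • x = bv A • y)
    (f : ℂ⟦X⟧) (k : ℕ) (x : E) : (bv A * eA A f) ^ k • x ∈ bFiltration A E k := by
  induction k with
  | zero => exact mem_bFiltration.mpr ⟨x, by rw [pow_zero, pow_zero]⟩
  | succ k ih =>
    rw [pow_succ', mul_smul, mul_smul]
    exact bv_smul_mem_bFiltration (eA_smul_mem_bFiltration hpole f ih)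

theorem eq_zero_of_forall_bv_mul_eA_pow_smul (hpole : ∀ x : E, ∃ y : E, av A • x = bv A • y)
    (hsep : ∀ x : E, (∀ k : ℕ, ∃ y : E, x = bv A ^ k • y) → x = 0) (f : ℂ⟦X⟧) {x : E}
    (hx : ∀ k : ℕ, ∃ y : E, x = (bv A * eA A f) ^ k • y) : x = 0 :=
  hsep x fun k => by
    obtain ⟨y, rfl⟩ := hx k
    obtain ⟨z, hz⟩ := mem_bFiltration.mp (bv_mul_eA_pow_smul_mem_bFiltration hpole f k y)
    exact ⟨z, hz.symm⟩

end Filtration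

section Twisted

variable {A : Type*} [Ring A]

def Twisted.of (Θ : A →+* A) (E : Type*) [AddCommGroup E] : E ≃+ Twisted A Θ E :=
  AddEquiv.refl E

theorem Twisted.smul_of {Θ : A →+* A} {E : Type*} [AddCommGroup E] [Module A E] (r : A)
    (x : E) : r • Twisted.of Θ E x = Twisted.of Θ E (Θ r • x) :=
  rfl

def Twisted.map (Θ : A →+* A) {E F : Type*} [AddCommGroup E] [Module A E] [AddCommGroup F]
    [Module A F] (f : E →ₗ[A] F) : Twisted A Θ E →ₗ[A] Twisted A Θ F where
  toFun x := Twisted.of Θ F (f ((Twisted.of Θ E).symm x))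
  map_add' := f.map_add
  map_smul' x := f.map_smul (Θ x)

end Twisted

section TwistedSimplePole

variable {A : Type u} [Ring A] [Algebra ℂ A] [AHatAlgebra A]

theorem isRegular_twisted (Θ : A →+* A)
    (h : ∀ (F : Type v) [AddCommGroup F] [Module A F],
      IsSimplePole A F → IsSimplePole A (Twisted A Θ F))
    {E : Type v} [AddCommGroup E] [Module A E] (hE : IsRegular A E) :
    IsRegular A (Twisted A Θ E) := by
  obtain ⟨F, i, hF, hi⟩ := hE
  exact ⟨ModuleCat.of A (Twisted A Θ F), Twisted.map Θ (F := F) i, h F hF, hi⟩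

variable {E : Type v} [AddCommGroup E] [Module A E] {φ : A →ₐ[ℂ] A} {g : ℂ⟦X⟧}

local notation "τ" => Twisted.of φ.toRingHom E

theorem twisted_finite_free (hg : IsUnit g) (hφb : φ (bv A) = bv A * eA A g)
    (hE : IsSimplePole A E) :
    let _ := psMod A (Twisted A φ.toRingHom E)
    Module.Finite ℂ⟦X⟧ (Twisted A φ.toRingHom E) ∧ Module.Free ℂ⟦X⟧ (Twisted A φ.toRingHom E) := by
  let _ := psMod A E
  let _ := psMod A (Twisted A φ.toRingHom E)
  obtain ⟨⟨_, _⟩, hpole⟩ := hE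
  obtain ⟨u, hu⟩ := hg.map (eA A)
  let B := Module.Free.chooseBasis ℂ⟦X⟧ E
  have hbX (k : ℕ) (x : E) : bv A ^ k • x = (X : ℂ⟦X⟧) ^ k • x := by
    change _ = eB A (X ^ k) • x
    rw [map_pow, eB_X]
  have hX (k : ℕ) (x : E) : (X : ℂ⟦X⟧) ^ k • τ x = τ ((bv A * eA A g) ^ k • x) := by
    change eB A (X ^ k) • τ x = _
    rw [Twisted.smul_of, AlgHom.toRingHom_eq_coe, RingHom.coe_coe, map_pow, eB_X, map_pow, hφb]
  have hX1 (x : E) : (X : ℂ⟦X⟧) • τ x = τ ((X : ℂ⟦X⟧) • (u : A) • x) := by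
    rw [← pow_one (X : ℂ⟦X⟧), hX, pow_one, mul_smul, hu, ← pow_one (bv A), hbX]
  refine B.finite_free_of_addEquiv τ (fun c x => ?_) (fun x => ⟨_, hX1 x⟩)
    (fun x => ⟨(u⁻¹ : Aˣ) • x, by rw [hX1, ← Units.smul_def, smul_inv_smul]⟩) ?_ ?_
  · change τ (eB A (C c) • x) = eB A (C c) • τ x
    rw [Twisted.smul_of, AlgHom.toRingHom_eq_coe, RingHom.coe_coe, (eB A).map_powerSeries_C,
      AlgHom.commutes]
  · intro x y h
    obtain ⟨x, rfl⟩ := (AddEquiv.surjective τ) x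
    obtain ⟨y, rfl⟩ := (AddEquiv.surjective τ) y
    simp only [hX1, (AddEquiv.injective τ).eq_iff] at h
    rw [u.isUnit.smul_left_cancel.mp (B.X_smul_injective h)]
  · intro x hx
    obtain ⟨x, rfl⟩ := (AddEquiv.surjective τ) x
    have hsepE (x : E) (hx : ∀ k : ℕ, ∃ y : E, x = bv A ^ k • y) : x = 0 :=
      B.eq_zero_of_forall_X_pow_smul fun k => by simpa only [hbX] using hx k
    refine (map_eq_zero_iff τ (AddEquiv.injective τ)).mpr
      (eq_zero_of_forall_bv_mul_eA_pow_smul hpole hsepE g fun k => ?_)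
    obtain ⟨y, hy⟩ := hx k
    obtain ⟨y, rfl⟩ := (AddEquiv.surjective τ) y
    rw [hX] at hy
    exact ⟨y, (AddEquiv.injective τ) hy⟩

theorem twisted_exists_av_smul_eq_bv_smul {θ : ℂ⟦X⟧} (hθ : constantCoeff θ = 0) (hg : IsUnit g)
    (hφa : φ (av A) = eA A θ) (hφb : φ (bv A) = bv A * eA A g)
    (hpole : ∀ x : E, ∃ y : E, av A • x = bv A • y) (x : Twisted A φ.toRingHom E) :
    ∃ y : Twisted A φ.toRingHom E, av A • x = bv A • y := by
  obtain ⟨u, hu⟩ := hg.map (eA A)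
  obtain ⟨x, rfl⟩ := (AddEquiv.surjective τ) x
  obtain ⟨q, rfl⟩ := X_dvd_iff.mpr hθ
  obtain ⟨y, hy⟩ := hpole (eA A q • x)
  refine ⟨τ ((u⁻¹ : Aˣ) • y), ?_⟩
  rw [Twisted.smul_of, Twisted.smul_of, AlgHom.toRingHom_eq_coe, RingHom.coe_coe, hφa, hφb,
    map_mul, eA_X, mul_smul, hy, mul_smul, ← hu, ← Units.smul_def, smul_inv_smul]

theorem isSimplePole_twisted {θ : ℂ⟦X⟧} (hθ : constantCoeff θ = 0) (hg : IsUnit g)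
    (hφa : φ (av A) = eA A θ) (hφb : φ (bv A) = bv A * eA A g) (hE : IsSimplePole A E) :
    IsSimplePole A (Twisted A φ.toRingHom E) :=
  ⟨twisted_finite_free hg hφb hE, twisted_exists_av_smul_eq_bv_smul hθ hg hφa hφb hE.2⟩

end TwistedSimplePole

end AHat

open AHat in
/-- If `E` is a simple pole (a,b)-module (resp. a regular (a,b)-module), then
for any change of variable `θ`, so is `θ_*(E)`. -/
theorem statement7 (A : Type u) [Ring A] [Algebra ℂ A] [AHatAlgebra A]
    (θ : PowerSeries ℂ) (hθ0 : PowerSeries.constantCoeff θ = 0)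
    (hθ1 : PowerSeries.coeff 1 θ ≠ 0)
    (Θ : A ≃ₐ[ℂ] A) (hΘa : Θ (av A) = eA A θ)
    (hΘb : Θ (bv A) = bv A * eA A θ.derivativeFun)
    (E : Type v) [AddCommGroup E] [Module A E] :
    (IsSimplePole A E → IsSimplePole A (Twisted A Θ.toAlgHom.toRingHom E)) ∧
    (IsRegular A E → IsRegular A (Twisted A Θ.toAlgHom.toRingHom E)) := by
  have hθ' : IsUnit (d⁄dX ℂ θ) := by
    have h := constantCoeff_iterate_derivative θ 1
    rw [Function.iterate_one, Nat.factorial_one, Nat.cast_one, one_mul] at h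
    exact isUnit_iff_constantCoeff.mpr (h ▸ hθ1.isUnit)
  have hsimple (F : Type v) [AddCommGroup F] [Module A F] (hF : IsSimplePole A F) :
      IsSimplePole A (Twisted A Θ.toAlgHom.toRingHom F) :=
    isSimplePole_twisted hθ0 hθ' hΘa hΘb hF
  exact ⟨hsimple E, isRegular_twisted _ hsimple⟩
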